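/- Let S = M_{d_1}(ℂ) ⊕ ⋯ ⊕ M_{d_k}(ℂ). For every double bracket ⟨⟨−,−⟩⟩ on S there exist complex numbers α^{pq}_{abcd} (for all p ≠ q, 1 ≤ a,d ≤ d_p, 1 ≤ b,c ≤ d_q) and β^i_{efgh} (for all i and (e,f) ≠ (1,1) ≠ (g,h) in {1,…,d_i}²) such that ⟨⟨−,−⟩⟩ = ⟨⟨−,−⟩⟩_P for P = ∑ α^{pq}_{abcd} · y^{pq}_{ab} y^{qp}_{cd} + ∑ β^i_{efgh} · x^i_{ef} x^i_{gh}; that is, every double bracket on S is the linear combination, with these coefficients, of the double brackets associated to the monomials y^{pq}_{ab} y^{qp}_{cd} and x^i_{ef} x^i_{gh}. -/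

import Mathlib

/-!
`S` is separable: `e = ∑ᵢ dᵢ⁻¹ ∑_{p,q} e^i_{pq} ⊗ e^i_{qp}` satisfies `∑ e′e″ = 1` and
`(a ⊗ 1) e = e (1 ⊗ a)`, so every derivation of `S` into an `S`-bimodule is inner. By
skew-symmetry a double bracket is a derivation in its first argument for the inner bimodule
structure of `S ⊗ S`, hence `⟨⟨x, y⟩⟩ = (1 ⊗ x) Θ(y) − Θ(y) (x ⊗ 1)` for a map `Θ` which inherits
from the second argument the property of being a double derivation; so `Θ = d_ζ` is inner as well.
Skew-symmetry once more gives `2 ⟨⟨−,−⟩⟩ = λ_ζ` (`skewBracket ζ`), where `λ` is linear in `ζ` and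
`λ_{e^i_{pq} ⊗ e^j_{rs}}` is minus the bracket of `y^{ji}_{rq} y^{ij}_{ps}` (if `i ≠ j`) or of
`x^i_{rq} x^i_{ps}`. The monomials with a forbidden index `(1,1)` are removed with
`λ_{t ⊗ s} = −λ_{s ⊗ t}` and the relation `∑ₘ λ_{e^i_{pm} ⊗ e^i_{ms}} = 0`, which holds because
`∑ₘ e^i_{pm} ⊗ e^i_{ms}` commutes with the inner action.
-/

open TensorProduct

set_option synthInstance.maxHeartbeats 1000000
set_option maxHeartbeats 1000000

noncomputable section

/-- The finite dimensional semisimple algebra `S = M_{d 0}(ℂ) ⊕ ⋯ ⊕ M_{d (k-1)}(ℂ)`. -/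
abbrev MatS (k : ℕ) (d : Fin k → ℕ) : Type :=
  ∀ i : Fin k, Matrix (Fin (d i)) (Fin (d i)) ℂ

variable (k : ℕ) (d : Fin k → ℕ)

/-- `θ` is a double derivation for the outer bimodule structure on `S ⊗ S`. -/
def IsDD (θ : MatS k d →ₗ[ℂ] MatS k d ⊗[ℂ] MatS k d) : Prop :=
  ∀ a b : MatS k d,
    θ (a * b) = (a ⊗ₜ[ℂ] (1 : MatS k d)) * θ b + θ a * ((1 : MatS k d) ⊗ₜ[ℂ] b)

/-- The space of double derivations `DDer(S)`. -/
def DDer : Submodule ℂ (MatS k d →ₗ[ℂ] MatS k d ⊗[ℂ] MatS k d) where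
  carrier := {θ | IsDD k d θ}
  add_mem' := by
    intro θ η hθ hη a b
    simp only [LinearMap.add_apply, hθ a b, hη a b, mul_add, add_mul]
    abel
  zero_mem' := by intro a b; simp
  smul_mem' := by
    intro c θ hθ a b
    simp only [LinearMap.smul_apply, hθ a b, smul_add, mul_smul_comm, smul_mul_assoc]

/-- The map `u ↦ (1 ⊗ s) * u * (t ⊗ 1)`, realizing the inner bimodule action
`(s·θ·t)(u) = θ(u)' t ⊗ s θ(u)''` after composition with `θ`. -/
def innerMap (s t : MatS k d) : MatS k d ⊗[ℂ] MatS k d →ₗ[ℂ] MatS k d ⊗[ℂ] MatS k d :=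
  (LinearMap.mulRight ℂ (t ⊗ₜ[ℂ] (1 : MatS k d))).comp
    (LinearMap.mulLeft ℂ ((1 : MatS k d) ⊗ₜ[ℂ] s))

lemma innerMap_isDD (s t : MatS k d) (θ : MatS k d →ₗ[ℂ] MatS k d ⊗[ℂ] MatS k d)
    (hθ : IsDD k d θ) : IsDD k d ((innerMap k d s t).comp θ) := by
  intro a b
  have h1 : ((1 : MatS k d) ⊗ₜ[ℂ] s) * (a ⊗ₜ[ℂ] (1 : MatS k d))
      = (a ⊗ₜ[ℂ] (1 : MatS k d)) * ((1 : MatS k d) ⊗ₜ[ℂ] s) := by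
    simp [Algebra.TensorProduct.tmul_mul_tmul]
  have h2 : ((1 : MatS k d) ⊗ₜ[ℂ] b) * (t ⊗ₜ[ℂ] (1 : MatS k d))
      = (t ⊗ₜ[ℂ] (1 : MatS k d)) * ((1 : MatS k d) ⊗ₜ[ℂ] b) := by
    simp [Algebra.TensorProduct.tmul_mul_tmul]
  simp only [LinearMap.comp_apply, hθ a b, innerMap, LinearMap.mulLeft_apply,
    LinearMap.mulRight_apply, mul_add, add_mul]
  congr 1
  · simp only [mul_assoc]
    rw [← mul_assoc, h1, mul_assoc]
  · simp only [mul_assoc]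
    rw [h2]

/-- The inner `S`-bimodule action on `DDer(S)`:  `(s·θ·t)(u) = θ(u)' t ⊗ s θ(u)''`. -/
def innerDD (s t : MatS k d) (θ : DDer k d) : DDer k d :=
  ⟨(innerMap k d s t).comp θ.1, innerMap_isDD k d s t θ.1 θ.2⟩

/-- The matrix unit `e^i_{pq}` of `S`. -/
def E (i : Fin k) (p q : Fin (d i)) : MatS k d :=
  Pi.single i (Matrix.single p q 1)

/-- The inner double derivation `d_x(y) = x (1 ⊗ y) - (y ⊗ 1) x`. -/
def dIn (x : MatS k d ⊗[ℂ] MatS k d) : MatS k d →ₗ[ℂ] MatS k d ⊗[ℂ] MatS k d :=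
  (LinearMap.mulLeft ℂ x).comp (TensorProduct.mk ℂ (MatS k d) (MatS k d) 1)
    - (LinearMap.mulRight ℂ x).comp ((TensorProduct.mk ℂ (MatS k d) (MatS k d)).flip 1)

lemma dIn_isDD (x : MatS k d ⊗[ℂ] MatS k d) : IsDD k d (dIn k d x) := by
  intro a b
  simp only [dIn, LinearMap.sub_apply, LinearMap.comp_apply, TensorProduct.mk_apply,
    LinearMap.flip_apply, LinearMap.mulLeft_apply, LinearMap.mulRight_apply, mul_sub, sub_mul]
  have h1 : ((1 : MatS k d) ⊗ₜ[ℂ] (a * b)) = ((1 : MatS k d) ⊗ₜ[ℂ] a) * ((1 : MatS k d) ⊗ₜ[ℂ] b) := by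
    simp [Algebra.TensorProduct.tmul_mul_tmul]
  have h2 : ((a * b) ⊗ₜ[ℂ] (1 : MatS k d)) = (a ⊗ₜ[ℂ] (1 : MatS k d)) * (b ⊗ₜ[ℂ] (1 : MatS k d)) := by
    simp [Algebra.TensorProduct.tmul_mul_tmul]
  have h3 : (a ⊗ₜ[ℂ] (1 : MatS k d)) * ((1 : MatS k d) ⊗ₜ[ℂ] b) = a ⊗ₜ[ℂ] b := by
    simp [Algebra.TensorProduct.tmul_mul_tmul]
  have h4 : ((1 : MatS k d) ⊗ₜ[ℂ] a) * (b ⊗ₜ[ℂ] (1 : MatS k d)) = b ⊗ₜ[ℂ] a := by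
    simp [Algebra.TensorProduct.tmul_mul_tmul]
  rw [h1, h2]
  simp only [mul_assoc]
  abel


/-- Auxiliary bilinear map `(x, y) ↦ (w ↦ (1 ⊗ x) * w * (y ⊗ 1))`, used to multiply Sweedler
components:  on pure tensors it sends `(x ⊗ y, u ⊗ v)` to `(u y) ⊗ (x v)`. -/
def mixAux (k : ℕ) (d : Fin k → ℕ) :
    MatS k d →ₗ[ℂ] MatS k d →ₗ[ℂ]
      (MatS k d ⊗[ℂ] MatS k d →ₗ[ℂ] MatS k d ⊗[ℂ] MatS k d) :=
  LinearMap.mk₂ ℂ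
    (fun x y => (LinearMap.mulRight ℂ (y ⊗ₜ[ℂ] (1 : MatS k d))).comp
      (LinearMap.mulLeft ℂ ((1 : MatS k d) ⊗ₜ[ℂ] x)))
    (fun x x' y => by
      ext w
      simp [TensorProduct.tmul_add, add_mul])
    (fun c x y => by
      ext w
      simp [TensorProduct.tmul_smul, smul_mul_assoc])
    (fun x y y' => by
      ext w
      simp [TensorProduct.add_tmul, mul_add])
    (fun c x y => by
      ext w
      simp [TensorProduct.smul_tmul', mul_smul_comm])

/-- `mixer z w` is, for `z = x ⊗ y` and `w = u ⊗ v`, the element `(u y) ⊗ (x v)`. -/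
def mixer (k : ℕ) (d : Fin k → ℕ) :
    MatS k d ⊗[ℂ] MatS k d →ₗ[ℂ]
      (MatS k d ⊗[ℂ] MatS k d →ₗ[ℂ] MatS k d ⊗[ℂ] MatS k d) :=
  TensorProduct.lift (mixAux k d)

/-- The double bracket associated to an ordered monomial `P = θ η` of double derivations:
`⟨⟨x,y⟩⟩_P = η(y)′ θ(x)″ ⊗ θ(x)′ η(y)″ − θ(y)′ η(x)″ ⊗ η(x)′ θ(y)″`. -/
def bracketP (k : ℕ) (d : Fin k → ℕ)
    (θ η : MatS k d →ₗ[ℂ] MatS k d ⊗[ℂ] MatS k d) (x y : MatS k d) :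
    MatS k d ⊗[ℂ] MatS k d :=
  mixer k d (θ x) (η y) - mixer k d (η x) (θ y)

/-- The double bracket `⟨⟨−,−⟩⟩_P` of `P = θ η` as a bilinear map. -/
def bracketOf (k : ℕ) (d : Fin k → ℕ)
    (θ η : MatS k d →ₗ[ℂ] MatS k d ⊗[ℂ] MatS k d) :
    MatS k d →ₗ[ℂ] MatS k d →ₗ[ℂ] MatS k d ⊗[ℂ] MatS k d :=
  LinearMap.mk₂ ℂ (fun x y => bracketP k d θ η x y)
    (fun x x' y => by simp only [bracketP, map_add, LinearMap.add_apply]; abel)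
    (fun c x y => by simp only [bracketP, map_smul, LinearMap.smul_apply, smul_sub])
    (fun x y y' => by simp only [bracketP, map_add]; abel)
    (fun c x y => by simp only [bracketP, map_smul, smul_sub])

/-- `σ(x ⊗ y ⊗ z) = z ⊗ x ⊗ y` on `S ⊗ S ⊗ S`. -/
def sigma3 (k : ℕ) (d : Fin k → ℕ) :
    (MatS k d ⊗[ℂ] MatS k d) ⊗[ℂ] MatS k d →ₗ[ℂ]
      (MatS k d ⊗[ℂ] MatS k d) ⊗[ℂ] MatS k d :=
  (TensorProduct.assoc ℂ (MatS k d) (MatS k d) (MatS k d)).symm.toLinearMap.comp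
    (TensorProduct.comm ℂ (MatS k d ⊗[ℂ] MatS k d) (MatS k d)).toLinearMap

/-- The double Jacobi identity
`⟨⟨a,⟨⟨b,c⟩⟩⟩⟩_L + σ(⟨⟨b,⟨⟨c,a⟩⟩⟩⟩_L) + σ²(⟨⟨c,⟨⟨a,b⟩⟩⟩⟩_L) = 0`,
where `⟨⟨a, u ⊗ v⟩⟩_L = ⟨⟨a, u⟩⟩ ⊗ v`. -/
def DoubleJacobi (k : ℕ) (d : Fin k → ℕ)
    (B : MatS k d →ₗ[ℂ] MatS k d →ₗ[ℂ] MatS k d ⊗[ℂ] MatS k d) : Prop :=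
  ∀ a b c : MatS k d,
    TensorProduct.map (B a) LinearMap.id (B b c)
      + sigma3 k d (TensorProduct.map (B b) LinearMap.id (B c a))
      + sigma3 k d (sigma3 k d (TensorProduct.map (B c) LinearMap.id (B a b))) = 0

/-- The index `1` (first row/column index) in `Fin (d i)`. -/
def o (k : ℕ) (d : Fin k → ℕ) (hd : ∀ i, 0 < d i) (i : Fin k) : Fin (d i) := ⟨0, hd i⟩

/-- The double derivation `y^{pq}_{ab} = d_{e^p_{a1} ⊗ e^q_{1b}}`. -/
def yy (k : ℕ) (d : Fin k → ℕ) (hd : ∀ i, 0 < d i) (p q : Fin k)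
    (a : Fin (d p)) (b : Fin (d q)) : MatS k d →ₗ[ℂ] MatS k d ⊗[ℂ] MatS k d :=
  dIn k d (E k d p a (o k d hd p) ⊗ₜ[ℂ] E k d q (o k d hd q) b)

/-- The double derivation `x^i_{pq} = d_{e^i_{p1} ⊗ e^i_{1q}}`. -/
def xx (k : ℕ) (d : Fin k → ℕ) (hd : ∀ i, 0 < d i) (i : Fin k)
    (p q : Fin (d i)) : MatS k d →ₗ[ℂ] MatS k d ⊗[ℂ] MatS k d :=
  dIn k d (E k d i p (o k d hd i) ⊗ₜ[ℂ] E k d i (o k d hd i) q)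

section Separability

variable {R A T : Type*} [CommRing R] [Ring A] [Algebra R A] [Ring T] [Algebra R T]

def IsSeparabilityElement (e : A ⊗[R] A) : Prop :=
  LinearMap.mul' R A e = 1 ∧ ∀ a : A, (a ⊗ₜ[R] (1 : A)) * e = e * ((1 : A) ⊗ₜ[R] a)

def innerWitness (φ : A →ₐ[R] T) (e : A ⊗[R] A) : (A →ₗ[R] T) →ₗ[R] T where
  toFun D := TensorProduct.lift ((LinearMap.mul R T).compl₁₂ φ.toLinearMap D) e
  map_add' D D' := by
    induction e using TensorProduct.induction_on with
    | zero => simp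
    | tmul x y => simp [mul_add]
    | add e e' he he' => simp only [map_add, he, he']; abel
  map_smul' c D := by
    induction e using TensorProduct.induction_on with
    | zero => simp
    | tmul x y => simp
    | add e e' he he' => simp only [map_add, he, he', smul_add, RingHom.id_apply]

variable (φ : A →ₐ[R] T)

@[simp]
theorem innerWitness_tmul (x y : A) (D : A →ₗ[R] T) :
    innerWitness φ (x ⊗ₜ[R] y) D = φ x * D y := rfl

theorem innerWitness_add (e e' : A ⊗[R] A) (D : A →ₗ[R] T) :
    innerWitness φ (e + e') D = innerWitness φ e D + innerWitness φ e' D :=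
  map_add (TensorProduct.lift _) e e'

theorem innerWitness_tmul_one_mul (a : A) (e : A ⊗[R] A) (D : A →ₗ[R] T) :
    innerWitness φ ((a ⊗ₜ[R] (1 : A)) * e) D = φ a * innerWitness φ e D := by
  induction e using TensorProduct.induction_on with
  | zero => simp [innerWitness]
  | tmul x y => simp [mul_assoc]
  | add e e' he he' => rw [mul_add, innerWitness_add, innerWitness_add, he, he', mul_add]

theorem innerWitness_mul_one_tmul {ψ : A → T} {D : A →ₗ[R] T}
    (hD : ∀ a b, D (a * b) = φ a * D b + D a * ψ b) (a : A) (e : A ⊗[R] A) :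
    innerWitness φ (e * ((1 : A) ⊗ₜ[R] a)) D
      = φ (LinearMap.mul' R A e) * D a + innerWitness φ e D * ψ a := by
  induction e using TensorProduct.induction_on with
  | zero => simp [innerWitness]
  | tmul x y => simp [hD, mul_add, mul_assoc]
  | add e e' he he' =>
    rw [add_mul, innerWitness_add, innerWitness_add, he, he', map_add, map_add]
    noncomm_ring

theorem IsSeparabilityElement.eq_mul_sub_mul {e : A ⊗[R] A} (he : IsSeparabilityElement e)
    {ψ : A → T} {D : A →ₗ[R] T} (hD : ∀ a b, D (a * b) = φ a * D b + D a * ψ b) (a : A) :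
    D a = φ a * innerWitness φ e D - innerWitness φ e D * ψ a := by
  have h := congrArg (innerWitness φ · D) (he.2 a)
  simp only [innerWitness_tmul_one_mul, innerWitness_mul_one_tmul φ hD, he.1, map_one,
    one_mul] at h
  rw [h, add_sub_cancel_right]

theorem innerWitness_mulLeft_comp {c : T} (hc : ∀ x, Commute (φ x) c) (e : A ⊗[R] A)
    (D : A →ₗ[R] T) :
    innerWitness φ e ((LinearMap.mulLeft R c).comp D) = c * innerWitness φ e D := by
  induction e using TensorProduct.induction_on with
  | zero => simp [innerWitness]
  | tmul x y => simp [← mul_assoc, (hc x).eq]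
  | add e e' he he' => rw [innerWitness_add, innerWitness_add, he, he', mul_add]

theorem innerWitness_mulRight_comp (c : T) (e : A ⊗[R] A) (D : A →ₗ[R] T) :
    innerWitness φ e ((LinearMap.mulRight R c).comp D) = innerWitness φ e D * c := by
  induction e using TensorProduct.induction_on with
  | zero => simp [innerWitness]
  | tmul x y => simp [mul_assoc]
  | add e e' he he' => rw [innerWitness_add, innerWitness_add, he, he', add_mul]

theorem innerWitness_comp_flip_apply_mul (e : A ⊗[R] A) {φ' ψ' : A → T}
    (hφ : ∀ x a, Commute (φ x) (φ' a)) (B : A →ₗ[R] A →ₗ[R] T)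
    (hB : ∀ z a b, B z (a * b) = φ' a * B z b + B z a * ψ' b) (a b : A) :
    (innerWitness φ e ∘ₗ B.flip) (a * b)
      = φ' a * (innerWitness φ e ∘ₗ B.flip) b + (innerWitness φ e ∘ₗ B.flip) a * ψ' b := by
  have h : B.flip (a * b) = (LinearMap.mulLeft R (φ' a)).comp (B.flip b)
      + (LinearMap.mulRight R (ψ' b)).comp (B.flip a) := by
    ext z
    simp [hB]
  simp only [LinearMap.comp_apply, h, map_add, innerWitness_mulLeft_comp φ (fun x => hφ x a),
    innerWitness_mulRight_comp]

end Separability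

section MatrixUnits

variable {k : ℕ} {d : Fin k → ℕ}

theorem E_mul_E (i : Fin k) (p q r s : Fin (d i)) :
    E k d i p q * E k d i r s = if q = r then E k d i p s else 0 := by
  split_ifs with h
  · subst h
    simp [E, ← Pi.single_mul]
  · simp [E, ← Pi.single_mul, Matrix.single_mul_single_of_ne _ _ _ _ h]

theorem E_mul_E_of_ne {i j : Fin k} (h : i ≠ j) (p q : Fin (d i)) (r s : Fin (d j)) :
    E k d i p q * E k d j r s = 0 := by
  ext l : 1
  by_cases hl : l = i
  · subst hl
    simp [E, Pi.single_eq_of_ne h]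
  · simp [E, Pi.single_eq_of_ne hl]

theorem sum_E_diag : ∑ i, ∑ p, E k d i p p = 1 := by
  conv_rhs => rw [← Finset.univ_sum_single (1 : MatS k d)]
  refine Finset.sum_congr rfl fun i _ => ?_
  rw [Pi.one_apply, ← Matrix.sum_single_one]
  exact (map_sum (LinearMap.single ℂ (fun i => Matrix (Fin (d i)) (Fin (d i)) ℂ) i) _ _).symm

theorem MatS.linearMap_ext {V : Type*} [AddCommMonoid V] [Module ℂ V]
    {f g : MatS k d →ₗ[ℂ] V} (h : ∀ i p q, f (E k d i p q) = g (E k d i p q)) : f = g :=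
  LinearMap.pi_ext' fun i => Matrix.ext_linearMap ℂ fun p q => LinearMap.ext_ring (h i p q)

theorem MatS.apply_mem_of_forall_E {V : Type*} [AddCommGroup V] [Module ℂ V]
    {W : Submodule ℂ V} (f : MatS k d →ₗ[ℂ] V) (h : ∀ i p q, f (E k d i p q) ∈ W)
    (x : MatS k d) : f x ∈ W := by
  have hf : W.mkQ ∘ₗ f = 0 := MatS.linearMap_ext fun i p q => by simpa using h i p q
  simpa using LinearMap.congr_fun hf x

end MatrixUnits

section SeparabilityElement

def separabilityElement : MatS k d ⊗[ℂ] MatS k d :=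
  ∑ i, ∑ p, ∑ q, (d i : ℂ)⁻¹ • (E k d i p q ⊗ₜ[ℂ] E k d i q p)

variable {k d}

theorem mul'_separabilityElement : LinearMap.mul' ℂ (MatS k d) (separabilityElement k d) = 1 := by
  have h (i : Fin k) (p : Fin (d i)) :
      ∑ _q : Fin (d i), (d i : ℂ)⁻¹ • E k d i p p = E k d i p p := by
    rw [Finset.sum_const, Finset.card_univ, Fintype.card_fin, ← Nat.cast_smul_eq_nsmul ℂ,
      smul_smul, mul_inv_cancel₀ (Nat.cast_ne_zero.mpr p.pos.ne'), one_smul]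
  simp only [separabilityElement, map_sum, map_smul, LinearMap.mul'_apply, E_mul_E, if_true, h,
    sum_E_diag]

theorem tmul_one_mul_separabilityElement (a : MatS k d) :
    (a ⊗ₜ[ℂ] (1 : MatS k d)) * separabilityElement k d
      = separabilityElement k d * ((1 : MatS k d) ⊗ₜ[ℂ] a) := by
  have hext := MatS.linearMap_ext
    (f := LinearMap.mulRight ℂ (separabilityElement k d) ∘ₗ (TensorProduct.mk ℂ _ _).flip 1)
    (g := LinearMap.mulLeft ℂ (separabilityElement k d) ∘ₗ TensorProduct.mk ℂ _ _ 1)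
    fun j r s => by
      simp only [separabilityElement, LinearMap.comp_apply, LinearMap.flip_apply,
        TensorProduct.mk_apply, LinearMap.mulRight_apply, LinearMap.mulLeft_apply,
        Finset.mul_sum, Finset.sum_mul, mul_smul_comm, smul_mul_assoc,
        Algebra.TensorProduct.tmul_mul_tmul, one_mul, mul_one]
      rw [Finset.sum_eq_single j (fun i _ hij => by simp [E_mul_E_of_ne (Ne.symm hij)]) (by simp),
        Finset.sum_eq_single j (fun i _ hij => by simp [E_mul_E_of_ne hij]) (by simp)]
      simp [E_mul_E, TensorProduct.ite_tmul, TensorProduct.tmul_ite]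
  exact LinearMap.congr_fun hext a

theorem isSeparabilityElement_separabilityElement :
    IsSeparabilityElement (separabilityElement k d) :=
  ⟨mul'_separabilityElement, tmul_one_mul_separabilityElement⟩

end SeparabilityElement

section InnerBrackets

variable {k : ℕ} {d : Fin k → ℕ}

theorem dIn_apply (ζ : MatS k d ⊗[ℂ] MatS k d) (y : MatS k d) :
    dIn k d ζ y = ζ * ((1 : MatS k d) ⊗ₜ[ℂ] y) - (y ⊗ₜ[ℂ] (1 : MatS k d)) * ζ := by
  simp [dIn]

theorem dIn_tmul (s t y : MatS k d) :
    dIn k d (s ⊗ₜ[ℂ] t) y = s ⊗ₜ[ℂ] (t * y) - (y * s) ⊗ₜ[ℂ] t := by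
  simp [dIn_apply, Algebra.TensorProduct.tmul_mul_tmul]

theorem mixer_tmul (a b c e : MatS k d) :
    mixer k d (a ⊗ₜ[ℂ] b) (c ⊗ₜ[ℂ] e) = (c * b) ⊗ₜ[ℂ] (a * e) := by
  simp [mixer, mixAux, Algebra.TensorProduct.tmul_mul_tmul]

def innerCommutator (ζ : MatS k d ⊗[ℂ] MatS k d) (x y : MatS k d) : MatS k d ⊗[ℂ] MatS k d :=
  ((1 : MatS k d) ⊗ₜ[ℂ] x) * dIn k d ζ y - dIn k d ζ y * (x ⊗ₜ[ℂ] (1 : MatS k d))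

theorem innerCommutator_add (ζ ζ' : MatS k d ⊗[ℂ] MatS k d) (x y : MatS k d) :
    innerCommutator (ζ + ζ') x y = innerCommutator ζ x y + innerCommutator ζ' x y := by
  simp only [innerCommutator, dIn_apply, add_mul, mul_add, sub_mul, mul_sub]
  abel

theorem innerCommutator_smul (c : ℂ) (ζ : MatS k d ⊗[ℂ] MatS k d) (x y : MatS k d) :
    innerCommutator (c • ζ) x y = c • innerCommutator ζ x y := by
  simp only [innerCommutator, dIn_apply, smul_mul_assoc, mul_smul_comm, mul_sub, sub_mul,
    smul_sub]

theorem innerCommutator_tmul (s t x y : MatS k d) :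
    innerCommutator (s ⊗ₜ[ℂ] t) x y =
      s ⊗ₜ[ℂ] (x * t * y) - (y * s) ⊗ₜ[ℂ] (x * t) - (s * x) ⊗ₜ[ℂ] (t * y)
        + (y * s * x) ⊗ₜ[ℂ] t := by
  simp only [innerCommutator, dIn_tmul, mul_sub, sub_mul, Algebra.TensorProduct.tmul_mul_tmul,
    one_mul, mul_one, mul_assoc]
  abel

theorem innerCommutator_eq_zero {Z : MatS k d ⊗[ℂ] MatS k d}
    (hZ : ∀ a, Z * (a ⊗ₜ[ℂ] (1 : MatS k d)) = ((1 : MatS k d) ⊗ₜ[ℂ] a) * Z) (x y : MatS k d) :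
    innerCommutator Z x y = 0 := by
  have hcomm : Commute ((1 : MatS k d) ⊗ₜ[ℂ] x) (y ⊗ₜ[ℂ] (1 : MatS k d)) := by
    simp [Commute, SemiconjBy, Algebra.TensorProduct.tmul_mul_tmul]
  have hcomm' : Commute ((1 : MatS k d) ⊗ₜ[ℂ] y) (x ⊗ₜ[ℂ] (1 : MatS k d)) := by
    simp [Commute, SemiconjBy, Algebra.TensorProduct.tmul_mul_tmul]
  have h1 : ((1 : MatS k d) ⊗ₜ[ℂ] x) * (Z * ((1 : MatS k d) ⊗ₜ[ℂ] y))
      = Z * ((1 : MatS k d) ⊗ₜ[ℂ] y) * (x ⊗ₜ[ℂ] (1 : MatS k d)) := by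
    rw [← mul_assoc, ← hZ, mul_assoc, mul_assoc, ← hcomm'.eq]
  have h2 : ((1 : MatS k d) ⊗ₜ[ℂ] x) * ((y ⊗ₜ[ℂ] (1 : MatS k d)) * Z)
      = (y ⊗ₜ[ℂ] (1 : MatS k d)) * Z * (x ⊗ₜ[ℂ] (1 : MatS k d)) := by
    rw [← mul_assoc, hcomm.eq, mul_assoc, ← hZ, mul_assoc]
  rw [innerCommutator, dIn_apply, mul_sub, sub_mul, h1, h2, sub_self]

def skewBracket : MatS k d ⊗[ℂ] MatS k d →ₗ[ℂ] (MatS k d → MatS k d → MatS k d ⊗[ℂ] MatS k d) where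
  toFun ζ x y := innerCommutator ζ x y - TensorProduct.comm ℂ _ _ (innerCommutator ζ y x)
  map_add' ζ ζ' := by
    ext x y
    simp only [innerCommutator_add, map_add, Pi.add_apply]
    abel
  map_smul' c ζ := by
    ext x y
    simp only [innerCommutator_smul, map_smul, Pi.smul_apply, smul_sub, RingHom.id_apply]

theorem skewBracket_apply (ζ : MatS k d ⊗[ℂ] MatS k d) (x y : MatS k d) :
    skewBracket ζ x y = innerCommutator ζ x y - TensorProduct.comm ℂ _ _ (innerCommutator ζ y x) :=
  rfl

theorem skewBracket_tmul_comm (s t : MatS k d) :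
    skewBracket (t ⊗ₜ[ℂ] s) = -skewBracket (s ⊗ₜ[ℂ] t) := by
  ext x y
  simp only [skewBracket_apply, innerCommutator_tmul, map_sub, map_add, TensorProduct.comm_tmul,
    Pi.neg_apply]
  abel

theorem skewBracket_tmul_self (s : MatS k d) : skewBracket (s ⊗ₜ[ℂ] s) = 0 := by
  have h : (2 : ℂ) • skewBracket (s ⊗ₜ[ℂ] s) = 0 := by
    rw [two_smul]
    nth_rw 1 [skewBracket_tmul_comm]
    exact neg_add_cancel _
  exact (smul_eq_zero.mp h).resolve_left two_ne_zero

theorem skewBracket_mul_tmul_mul (u v u' v' : MatS k d) :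
    skewBracket ((u' * v) ⊗ₜ[ℂ] (u * v')) =
      -fun x y => bracketP k d (dIn k d (u ⊗ₜ[ℂ] v)) (dIn k d (u' ⊗ₜ[ℂ] v')) x y := by
  ext x y
  simp only [skewBracket_apply, innerCommutator_tmul, bracketP, dIn_tmul, map_sub, map_add,
    LinearMap.sub_apply, mixer_tmul, TensorProduct.comm_tmul, Pi.neg_apply, mul_assoc]
  abel

end InnerBrackets

section CycleBrackets

variable {k : ℕ} {d : Fin k → ℕ}

theorem sum_E_tmul_E_mul_tmul_one (i : Fin k) (p s : Fin (d i)) (a : MatS k d) :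
    (∑ m, E k d i p m ⊗ₜ[ℂ] E k d i m s) * (a ⊗ₜ[ℂ] (1 : MatS k d))
      = ((1 : MatS k d) ⊗ₜ[ℂ] a) * ∑ m, E k d i p m ⊗ₜ[ℂ] E k d i m s := by
  have hext := MatS.linearMap_ext
    (f := LinearMap.mulLeft ℂ (∑ m, E k d i p m ⊗ₜ[ℂ] E k d i m s) ∘ₗ
      (TensorProduct.mk ℂ _ _).flip 1)
    (g := LinearMap.mulRight ℂ (∑ m, E k d i p m ⊗ₜ[ℂ] E k d i m s) ∘ₗ
      TensorProduct.mk ℂ _ _ 1)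
    fun j r t => by
      simp only [LinearMap.comp_apply, LinearMap.flip_apply, TensorProduct.mk_apply,
        LinearMap.mulRight_apply, LinearMap.mulLeft_apply, Finset.mul_sum, Finset.sum_mul,
        Algebra.TensorProduct.tmul_mul_tmul, one_mul, mul_one]
      rcases eq_or_ne i j with rfl | hij
      · simp [E_mul_E, TensorProduct.ite_tmul, TensorProduct.tmul_ite]
      · simp [E_mul_E_of_ne hij, E_mul_E_of_ne hij.symm]
  exact LinearMap.congr_fun hext a

theorem skewBracket_sum_E_tmul_E (i : Fin k) (p s : Fin (d i)) :
    ∑ m, skewBracket (E k d i p m ⊗ₜ[ℂ] E k d i m s) = 0 := by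
  rw [← map_sum]
  ext x y
  simp [skewBracket_apply, innerCommutator_eq_zero (sum_E_tmul_E_mul_tmul_one i p s)]

theorem skewBracket_E_tmul_E {i j : Fin k} (p q m : Fin (d i)) (r s n : Fin (d j)) :
    skewBracket (E k d i p q ⊗ₜ[ℂ] E k d j r s) =
      -fun x y => bracketP k d (dIn k d (E k d j r n ⊗ₜ[ℂ] E k d i m q))
        (dIn k d (E k d i p m ⊗ₜ[ℂ] E k d j n s)) x y := by
  rw [← skewBracket_mul_tmul_mul, E_mul_E, E_mul_E, if_pos rfl, if_pos rfl]

abbrev YIndex (k : ℕ) (d : Fin k → ℕ) : Type :=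
  Σ pq : Fin k × Fin k, Fin (d pq.1) × Fin (d pq.2) × Fin (d pq.2) × Fin (d pq.1)

abbrev XIndex (k : ℕ) (d : Fin k → ℕ) : Type :=
  Σ i : Fin k, Fin (d i) × Fin (d i) × Fin (d i) × Fin (d i)

/-- Indexed, and with the excluded monomials sent to `0`, exactly as the sums in
`double_brackets_from_cycles`. -/
def cycleBracket (hd : ∀ i, 0 < d i) :
    YIndex k d ⊕ XIndex k d → MatS k d → MatS k d → MatS k d ⊗[ℂ] MatS k d
  | .inl ⟨(p, q), (a, b, c, e)⟩ => fun x y =>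
    if p = q then 0 else bracketP k d (yy k d hd p q a b) (yy k d hd q p c e) x y
  | .inr ⟨i, (e, f, g, h)⟩ => fun x y =>
    if (e = o k d hd i ∧ f = o k d hd i) ∨ (g = o k d hd i ∧ h = o k d hd i) then 0
    else bracketP k d (xx k d hd i e f) (xx k d hd i g h) x y

variable (hd : ∀ i, 0 < d i)

theorem yBracket_mem_span {p q : Fin k} (hpq : p ≠ q) (a : Fin (d p)) (b c : Fin (d q))
    (e : Fin (d p)) :
    (fun x y => bracketP k d (yy k d hd p q a b) (yy k d hd q p c e) x y)
      ∈ Submodule.span ℂ (Set.range (cycleBracket hd)) := by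
  convert Submodule.subset_span (R := ℂ) (Set.mem_range_self
    (f := cycleBracket hd) (.inl ⟨(p, q), (a, b, c, e)⟩)) using 1
  simp [cycleBracket, hpq]

theorem xBracket_mem_span {i : Fin k} {e f g h : Fin (d i)}
    (hef : ¬(e = o k d hd i ∧ f = o k d hd i)) (hgh : ¬(g = o k d hd i ∧ h = o k d hd i)) :
    (fun x y => bracketP k d (xx k d hd i e f) (xx k d hd i g h) x y)
      ∈ Submodule.span ℂ (Set.range (cycleBracket hd)) := by
  convert Submodule.subset_span (R := ℂ) (Set.mem_range_self
    (f := cycleBracket hd) (.inr ⟨i, (e, f, g, h)⟩)) using 1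
  simp [cycleBracket, hef, hgh]

theorem skewBracket_E_tmul_E_mem_span_of_ne {i : Fin k} {p s : Fin (d i)}
    (hps : ¬(p = o k d hd i ∧ s = o k d hd i)) (q r : Fin (d i)) :
    skewBracket (E k d i p q ⊗ₜ[ℂ] E k d i r s)
      ∈ Submodule.span ℂ (Set.range (cycleBracket hd)) := by
  set o := o k d hd i
  by_cases hrq : r = o ∧ q = o
  · obtain ⟨rfl, rfl⟩ := hrq
    -- the relation `∑ₘ x^i_{mm} x^i_{ps} = 0` eliminates the excluded monomial `x^i_{11} x^i_{ps}`
    have h := skewBracket_sum_E_tmul_E i p s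
    rw [← Finset.add_sum_erase _ _ (Finset.mem_univ o)] at h
    rw [eq_neg_of_add_eq_zero_left h]
    refine Submodule.neg_mem _ (Submodule.sum_mem _ fun m hm => ?_)
    rw [skewBracket_E_tmul_E p m o m s o]
    exact Submodule.neg_mem _
      (xBracket_mem_span hd (fun h => Finset.ne_of_mem_erase hm h.1) hps)
  · rw [skewBracket_E_tmul_E p q o r s o]
    exact Submodule.neg_mem _ (xBracket_mem_span hd hrq hps)

theorem skewBracket_E_tmul_E_mem_span (i j : Fin k) (p q : Fin (d i)) (r s : Fin (d j)) :
    skewBracket (E k d i p q ⊗ₜ[ℂ] E k d j r s)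
      ∈ Submodule.span ℂ (Set.range (cycleBracket hd)) := by
  rcases eq_or_ne i j with rfl | hij
  · by_cases hps : p = o k d hd i ∧ s = o k d hd i
    · obtain ⟨rfl, rfl⟩ := hps
      by_cases hrq : r = o k d hd i ∧ q = o k d hd i
      · obtain ⟨rfl, rfl⟩ := hrq
        rw [skewBracket_tmul_self]
        exact Submodule.zero_mem _
      · rw [← neg_neg (skewBracket _), ← skewBracket_tmul_comm]
        exact Submodule.neg_mem _ (skewBracket_E_tmul_E_mem_span_of_ne hd hrq _ _)
    · exact skewBracket_E_tmul_E_mem_span_of_ne hd hps q r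
  · rw [skewBracket_E_tmul_E p q (o k d hd i) r s (o k d hd j)]
    exact Submodule.neg_mem _ (yBracket_mem_span hd hij.symm r q p s)

theorem skewBracket_mem_span (ζ : MatS k d ⊗[ℂ] MatS k d) :
    skewBracket ζ ∈ Submodule.span ℂ (Set.range (cycleBracket hd)) := by
  induction ζ using TensorProduct.induction_on with
  | zero => simp
  | tmul s t =>
    refine MatS.apply_mem_of_forall_E (skewBracket ∘ₗ (TensorProduct.mk ℂ _ _).flip t)
      (fun i p q => ?_) s
    exact MatS.apply_mem_of_forall_E (skewBracket ∘ₗ TensorProduct.mk ℂ _ _ (E k d i p q))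
      (fun j r s => skewBracket_E_tmul_E_mem_span hd i j p q r s) t
  | add ζ ζ' hζ hζ' => simpa using Submodule.add_mem _ hζ hζ'

end CycleBrackets

section DoubleBrackets

variable {k : ℕ} {d : Fin k → ℕ}

theorem TensorProduct.comm_mul {R A B : Type*} [CommSemiring R] [Semiring A] [Algebra R A]
    [Semiring B] [Algebra R B] (u v : A ⊗[R] B) :
    TensorProduct.comm R A B (u * v) = TensorProduct.comm R A B u * TensorProduct.comm R A B v :=
  map_mul (Algebra.TensorProduct.comm R A B) u v

/-- The negation that instance search finds on `MatS k d ⊗[ℂ] MatS k d` is not reducibly the one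
of its ring structure, so that `rw [neg_mul]` and `noncomm_ring` fail there. -/
theorem MatS.tensor_neg_mul (u v : MatS k d ⊗[ℂ] MatS k d) : -u * v = -(u * v) := neg_mul u v

theorem MatS.tensor_mul_neg (u v : MatS k d ⊗[ℂ] MatS k d) : u * -v = -(u * v) := mul_neg u v

def IsDoubleBracket (B : MatS k d →ₗ[ℂ] MatS k d →ₗ[ℂ] MatS k d ⊗[ℂ] MatS k d) : Prop :=
  (∀ x y z : MatS k d,
    B x (y * z) = (y ⊗ₜ[ℂ] (1 : MatS k d)) * B x z + B x y * ((1 : MatS k d) ⊗ₜ[ℂ] z)) ∧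
  ∀ x y : MatS k d, B x y = -TensorProduct.comm ℂ (MatS k d) (MatS k d) (B y x)

namespace IsDoubleBracket

variable {B : MatS k d →ₗ[ℂ] MatS k d →ₗ[ℂ] MatS k d ⊗[ℂ] MatS k d} (hB : IsDoubleBracket B)
include hB

theorem leibniz_left (x x' y : MatS k d) :
    B (x * x') y = ((1 : MatS k d) ⊗ₜ[ℂ] x) * B x' y + B x y * (x' ⊗ₜ[ℂ] (1 : MatS k d)) := by
  have hcomm (a b) : TensorProduct.comm ℂ (MatS k d) (MatS k d) (B a b) = -B b a := by
    rw [hB.2 b a, neg_neg]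
  rw [hB.2, hB.1, map_add, TensorProduct.comm_mul, TensorProduct.comm_mul, hcomm, hcomm,
    TensorProduct.comm_tmul, TensorProduct.comm_tmul, MatS.tensor_mul_neg, MatS.tensor_neg_mul,
    ← neg_add, neg_neg, add_comm]

theorem exists_eq_innerCommutator : ∃ ζ, ∀ x y, B x y = innerCommutator ζ x y := by
  have he := isSeparabilityElement_separabilityElement (k := k) (d := d)
  set Θ := innerWitness Algebra.TensorProduct.includeRight (separabilityElement k d) ∘ₗ B.flip
  have hBΘ (x y : MatS k d) : B x y = ((1 : MatS k d) ⊗ₜ[ℂ] x) * Θ y - Θ y * (x ⊗ₜ[ℂ] 1) :=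
    he.eq_mul_sub_mul Algebra.TensorProduct.includeRight (ψ := (· ⊗ₜ[ℂ] 1)) (D := B.flip y)
      (fun a b => hB.leibniz_left a b y) x
  have hΘ (a b : MatS k d) : Θ (a * b) = (a ⊗ₜ[ℂ] 1) * Θ b + Θ a * ((1 : MatS k d) ⊗ₜ[ℂ] b) :=
    innerWitness_comp_flip_apply_mul _ _
      (fun x a => by simp [Commute, SemiconjBy, Algebra.TensorProduct.tmul_mul_tmul]) B hB.1 a b
  refine ⟨-innerWitness Algebra.TensorProduct.includeLeft (separabilityElement k d) Θ,
    fun x y => ?_⟩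
  have hΘy := he.eq_mul_sub_mul Algebra.TensorProduct.includeLeft
    (ψ := ((1 : MatS k d) ⊗ₜ[ℂ] ·)) hΘ y
  rw [Algebra.TensorProduct.includeLeft_apply] at hΘy
  rw [hBΘ, innerCommutator, hΘy, dIn_apply, MatS.tensor_neg_mul, MatS.tensor_mul_neg,
    sub_neg_eq_add, neg_add_eq_sub]

theorem exists_eq_inv_two_smul_skewBracket :
    ∃ ζ, (fun x y => B x y) = (2 : ℂ)⁻¹ • skewBracket ζ := by
  obtain ⟨ζ, hζ⟩ := hB.exists_eq_innerCommutator
  refine ⟨ζ, funext₂ fun x y => ?_⟩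
  rw [Pi.smul_apply, Pi.smul_apply, skewBracket_apply, ← hζ, ← hζ, sub_eq_add_neg, ← hB.2,
    ← two_smul ℂ, inv_smul_smul₀ two_ne_zero]

end IsDoubleBracket

end DoubleBrackets

/-- Every double bracket on `S = M_{d 1}(ℂ) ⊕ ⋯ ⊕ M_{d k}(ℂ)` — i.e. every
ℂ-bilinear map `B : S × S → S ⊗ S` which is a derivation in its second argument for the outer
bimodule structure and satisfies `B a b = −(B b a)ᵒᵖ` — is the linear combination, for suitable
coefficients `α` and `β`, of the double brackets associated to the monomials
`y^{pq}_{ab} y^{qp}_{cd}` (`p ≠ q`) and `x^i_{ef} x^i_{gh}` (`(e,f) ≠ (1,1) ≠ (g,h)`). -/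
theorem double_brackets_from_cycles (k : ℕ) (d : Fin k → ℕ) (hd : ∀ i, 0 < d i)
    (B : MatS k d →ₗ[ℂ] MatS k d →ₗ[ℂ] MatS k d ⊗[ℂ] MatS k d)
    (hder : ∀ x y z : MatS k d,
      B x (y * z) = (y ⊗ₜ[ℂ] (1 : MatS k d)) * B x z + (B x y) * ((1 : MatS k d) ⊗ₜ[ℂ] z))
    (hskew : ∀ x y : MatS k d,
      B x y = - (TensorProduct.comm ℂ (MatS k d) (MatS k d)) (B y x)) :
    ∃ (α : ∀ p q : Fin k, Fin (d p) → Fin (d q) → Fin (d q) → Fin (d p) → ℂ)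
      (β : ∀ i : Fin k, Fin (d i) → Fin (d i) → Fin (d i) → Fin (d i) → ℂ),
      ∀ x y : MatS k d,
        B x y =
          (∑ p, ∑ q, ∑ a, ∑ b, ∑ c, ∑ e,
            if p = q then 0 else
              α p q a b c e •
                bracketP k d (yy k d hd p q a b) (yy k d hd q p c e) x y)
          + ∑ i, ∑ e, ∑ f, ∑ g, ∑ h,
              if (e = o k d hd i ∧ f = o k d hd i) ∨ (g = o k d hd i ∧ h = o k d hd i) then 0
              else β i e f g h •
                bracketP k d (xx k d hd i e f) (xx k d hd i g h) x y := by
  obtain ⟨ζ, hζ⟩ := IsDoubleBracket.exists_eq_inv_two_smul_skewBracket ⟨hder, hskew⟩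
  have hmem : (fun x y => B x y) ∈ Submodule.span ℂ (Set.range (cycleBracket hd)) :=
    hζ ▸ Submodule.smul_mem _ _ (skewBracket_mem_span hd ζ)
  obtain ⟨c, hc⟩ := (Submodule.mem_span_range_iff_exists_fun ℂ).mp hmem
  refine ⟨fun p q a b c' e => c (.inl ⟨(p, q), (a, b, c', e)⟩),
    fun i e f g h => c (.inr ⟨i, (e, f, g, h)⟩), fun x y => ?_⟩
  rw [← congrFun₂ hc x y]
  simp only [Finset.sum_apply, Pi.smul_apply, Fintype.sum_sum_type, Fintype.sum_sigma,
    Fintype.sum_prod_type, cycleBracket, smul_ite, smul_zero]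

end
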